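/- arXiv:2101.10190 — 2 statements merged into one kernel-verified Lean document; each statement's English description precedes it below -/
import Mathlib

section
/- Ring equilibria are constant states: if ρ* ∈ (0, ρmax)^N satisfies f1(ρᵢ₋₁*)f2(ρᵢ*) = f1(ρᵢ*)f2(ρᵢ₊₁*) for all i (cyclically), where f1(ρ) = ρ and f2(ρ) = ω(ρmax − ρ) with ω > 0, then all ρᵢ* are equal. -/
/-!
Take a site `i₀` where `ρ` is maximal. At a maximal site `i` the incoming flux
`ρᵢ₋₁ ω (ρmax - ρᵢ)` is at most `ρᵢ ω (ρmax - ρᵢ)`, so the balance forces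
`ρmax - ρᵢ₊₁ ≤ ρmax - ρᵢ`, i.e. site `i + 1` is maximal as well. Walking around the ring,
every site is maximal.
-/

open Fin.NatCast

theorem Fin.forall_of_add_one_imp {N : ℕ} [NeZero N] {P : Fin N → Prop} {i₀ : Fin N}
    (h₀ : P i₀) (hstep : ∀ i, P i → P (i + 1)) (j : Fin N) : P j := by
  have hshift : ∀ n : ℕ, P (i₀ + n) := by
    intro n
    induction n with
    | zero => simpa using h₀
    | succ n ih => simpa [add_assoc] using hstep _ ih
  simpa using hshift (j - i₀).val

theorem le_of_mul_sub_eq_mul_sub {a b c r : ℝ} (hab : a ≤ b) (hb : 0 < b) (hbr : b ≤ r)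
    (h : a * (r - b) = b * (r - c)) : b ≤ c := by
  have hflux : b * (r - c) ≤ b * (r - b) :=
    h ▸ mul_le_mul_of_nonneg_right hab (sub_nonneg.mpr hbr)
  linarith [le_of_mul_le_mul_left hflux hb]

theorem ring_equilibria_constant_general
    (N : ℕ) [NeZero N] (ω ρmax : ℝ) (hω : 0 < ω)
    (ρ : Fin N → ℝ) (hpos : ∀ i, 0 < ρ i) (hlt : ∀ i, ρ i < ρmax)
    (heq : ∀ i : Fin N, ρ (i - 1) * (ω * (ρmax - ρ i)) = ρ i * (ω * (ρmax - ρ (i + 1)))) :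
    ∀ i j, ρ i = ρ j := by
  obtain ⟨i₀, hi₀⟩ := Finite.exists_max ρ
  have hmax_succ : ∀ i, ρ i = ρ i₀ → ρ (i + 1) = ρ i₀ := by
    intro i hi
    have hbalance : ρ (i - 1) * (ρmax - ρ i) = ρ i * (ρmax - ρ (i + 1)) := by
      have := heq i
      rw [mul_left_comm, mul_left_comm (ρ i)] at this
      exact mul_left_cancel₀ hω.ne' this
    have := le_of_mul_sub_eq_mul_sub (hi ▸ hi₀ _) (hpos i) (hlt i).le hbalance
    linarith [hi₀ (i + 1)]
  have hall : ∀ j, ρ j = ρ i₀ := Fin.forall_of_add_one_imp rfl hmax_succ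
  exact fun i j => (hall i).trans (hall j).symm

theorem ring_equilibria_constant
    (N : ℕ) (hN : 2 ≤ N) [NeZero N] (ω ρmax : ℝ) (hω : 0 < ω) (hρmax : 0 < ρmax)
    (ρ : Fin N → ℝ) (hpos : ∀ i, 0 < ρ i) (hlt : ∀ i, ρ i < ρmax)
    (heq : ∀ i : Fin N, ρ (i - 1) * (ω * (ρmax - ρ i)) = ρ i * (ω * (ρmax - ρ (i + 1)))) :
    ∀ i j, ρ i = ρ j :=
  ring_equilibria_constant_general N ω ρmax hω ρ hpos hlt heq
end

section
/- Lyapunov decrease for the ring TRM: for ρ ∈ (0, ρmax)^N with cyclic indexing and mean ρ̄, the sum ∑_{i=1}^N log(ρᵢ/ρ̄)·[ρᵢ₋₁(ρmax − ρᵢ) − ρᵢ(ρmax − ρᵢ₊₁)] is nonpositive, i.e. ∑_{i=1}^N log(ρᵢ/ρ̄)·[ρᵢ₋₁(ρmax − ρᵢ) − ρᵢ(ρmax − ρᵢ₊₁)] ≤ 0. -/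
theorem lyapunov_decrease
    (N : ℕ) (hN : 2 ≤ N) [NeZero N] (ρmax : ℝ) (hρmax : 0 < ρmax)
    (ρ : Fin N → ℝ) (hpos : ∀ i, 0 < ρ i) (hlt : ∀ i, ρ i < ρmax)
    (ρbar : ℝ) (hρbar : ρbar = (1 / (N : ℝ)) * ∑ i, ρ i) :
    ∑ i : Fin N, Real.log (ρ i / ρbar)
        * (ρ (i - 1) * (ρmax - ρ i) - ρ i * (ρmax - ρ (i + 1))) ≤ 0 := by
  have hshift : ∀ (F : Fin N → ℝ), ∑ i, F (i + 1) = ∑ i, F i := by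
    intro F
    exact Fintype.sum_equiv (Equiv.addRight 1) _ _ (fun i => rfl)
  have hb : 0 < ρbar := by
    rw [hρbar]
    have hNpos : (0:ℝ) < N := by
      have : 0 < N := by omega
      exact_mod_cast this
    have hsum : 0 < ∑ i, ρ i :=
      Finset.sum_pos (fun i _ => hpos i) Finset.univ_nonempty
    positivity
  -- the bracket sums to zero over the ring
  have hg0 : ∑ i, (ρ (i - 1) * (ρmax - ρ i) - ρ i * (ρmax - ρ (i + 1))) = 0 := by
    rw [Finset.sum_sub_distrib]
    have h := hshift (fun i => ρ (i - 1) * (ρmax - ρ i))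
    simp only [add_sub_cancel_right] at h
    rw [h, sub_self]
  -- drop log ρbar
  have step1 : ∑ i : Fin N, Real.log (ρ i / ρbar)
        * (ρ (i - 1) * (ρmax - ρ i) - ρ i * (ρmax - ρ (i + 1)))
      = ∑ i : Fin N, Real.log (ρ i)
        * (ρ (i - 1) * (ρmax - ρ i) - ρ i * (ρmax - ρ (i + 1))) := by
    simp_rw [Real.log_div (hpos _).ne' hb.ne', sub_mul]
    rw [Finset.sum_sub_distrib, ← Finset.mul_sum, hg0, mul_zero, sub_zero]
  -- reindex the first half
  have h2 := hshift (fun i => Real.log (ρ i) * (ρ (i - 1) * (ρmax - ρ i)))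
  simp only [add_sub_cancel_right] at h2
  have step2 : ∑ i : Fin N, Real.log (ρ i)
        * (ρ (i - 1) * (ρmax - ρ i) - ρ i * (ρmax - ρ (i + 1)))
      = ∑ i : Fin N, (Real.log (ρ (i + 1)) - Real.log (ρ i))
        * (ρ i * (ρmax - ρ (i + 1))) := by
    have e : ∀ i : Fin N, Real.log (ρ i)
          * (ρ (i - 1) * (ρmax - ρ i) - ρ i * (ρmax - ρ (i + 1)))
        = Real.log (ρ i) * (ρ (i - 1) * (ρmax - ρ i))
          - Real.log (ρ i) * (ρ i * (ρmax - ρ (i + 1))) := fun i => by ring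
    simp_rw [e]
    rw [Finset.sum_sub_distrib, ← h2, ← Finset.sum_sub_distrib]
    exact Finset.sum_congr rfl (fun i _ => by ring)
  -- termwise log estimate
  have hterm : ∀ i : Fin N, (Real.log (ρ (i + 1)) - Real.log (ρ i))
        * (ρ i * (ρmax - ρ (i + 1)))
      ≤ (ρ (i + 1) - ρ i) * (ρmax - ρ (i + 1)) := by
    intro i
    have hx := hpos i
    have hy := hpos (i + 1)
    have hM : (0:ℝ) ≤ ρmax - ρ (i + 1) := le_of_lt (sub_pos.mpr (hlt _))
    have hlog : Real.log (ρ (i + 1)) - Real.log (ρ i) ≤ ρ (i + 1) / ρ i - 1 := by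
      rw [← Real.log_div hy.ne' hx.ne']
      exact Real.log_le_sub_one_of_pos (div_pos hy hx)
    have h3 : (Real.log (ρ (i + 1)) - Real.log (ρ i)) * ρ i ≤ ρ (i + 1) - ρ i := by
      have h4 : (ρ (i + 1) / ρ i - 1) * ρ i = ρ (i + 1) - ρ i := by field_simp
      nlinarith [mul_le_mul_of_nonneg_right hlog hx.le]
    nlinarith [mul_le_mul_of_nonneg_right h3 hM]
  -- cyclic square identity
  have hfin : ∑ i : Fin N, (ρ (i + 1) - ρ i) * (ρmax - ρ (i + 1)) ≤ 0 := by
    have e1 : ∀ i : Fin N, (ρ (i + 1) - ρ i) * (ρmax - ρ (i + 1))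
        = ((ρ (i + 1) - ρ i) * ρmax + (1/2) * ((ρ i)^2 - (ρ (i + 1))^2))
          - (1/2) * (ρ (i + 1) - ρ i)^2 := fun i => by ring
    simp_rw [e1]
    rw [Finset.sum_sub_distrib, Finset.sum_add_distrib]
    have s1 : ∑ i : Fin N, (ρ (i + 1) - ρ i) * ρmax = 0 := by
      rw [← Finset.sum_mul]
      have h0 : ∑ i : Fin N, (ρ (i + 1) - ρ i) = 0 := by
        rw [Finset.sum_sub_distrib, hshift (fun i => ρ i), sub_self]
      rw [h0, zero_mul]
    have s2 : ∑ i : Fin N, (1/2:ℝ) * ((ρ i)^2 - (ρ (i + 1))^2) = 0 := by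
      rw [← Finset.mul_sum, Finset.sum_sub_distrib, hshift (fun i => (ρ i)^2),
        sub_self, mul_zero]
    rw [s1, s2]
    have hnn : 0 ≤ ∑ i : Fin N, (1/2:ℝ) * (ρ (i + 1) - ρ i)^2 :=
      Finset.sum_nonneg (fun i _ => by positivity)
    linarith
  calc ∑ i : Fin N, Real.log (ρ i / ρbar)
        * (ρ (i - 1) * (ρmax - ρ i) - ρ i * (ρmax - ρ (i + 1)))
      = ∑ i : Fin N, (Real.log (ρ (i + 1)) - Real.log (ρ i))
        * (ρ i * (ρmax - ρ (i + 1))) := by rw [step1, step2]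
    _ ≤ ∑ i : Fin N, (ρ (i + 1) - ρ i) * (ρmax - ρ (i + 1)) :=
        Finset.sum_le_sum (fun i _ => hterm i)
    _ ≤ 0 := hfin
end
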